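/- arXiv:2101.05380 — 3 statements merged into one kernel-verified Lean document; each statement's English description precedes it below -/
import Mathlib

section
/- Let ℓ ≥ 1, λ₁ > 0, λ₂ > 0, let H_X and H_Y be real Hilbert spaces, let ŵ_μ, ψ₁, …, ψ_ℓ ∈ H_X, let ŵ_ν, χ₁, …, χ_ℓ ∈ H_Y, let c₁, …, c_ℓ ∈ ℝ, and let Φ₁, …, Φ_ℓ ∈ ℝ^ℓ. Define Q ∈ ℝ^{ℓ×ℓ} by Q_{ij} = ⟨ψ_i, ψ_j⟩ + ⟨χ_i, χ_j⟩, z_j = ⟨ŵ_μ, ψ_j⟩ + ⟨ŵ_ν, χ_j⟩ − 2λ₂ c_j, and q² = ‖ŵ_μ‖² + ‖ŵ_ν‖². Then for every primal-feasible triple (u, v, B), i.e., u ∈ H_X, v ∈ H_Y, B a positive semidefinite ℓ×ℓ matrix with c_j − ⟨u, ψ_j⟩ − ⟨v, χ_j⟩ = Φ_jᵀ B Φ_j for all j ∈ [ℓ], and every dual-feasible γ ∈ ℝ^ℓ, i.e., Σ_{j=1}^ℓ γ_j Φ_j Φ_jᵀ + λ₁·Id ⪰ 0, one has ⟨u, ŵ_μ⟩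 + ⟨v, ŵ_ν⟩ − λ₁ tr(B) − λ₂(‖u‖² + ‖v‖²) ≤ (1/(4λ₂)) γᵀ Q γ − (1/(2λ₂)) Σ_{j=1}^ℓ γ_j z_j + q²/(4λ₂). -/
/-!
Put `s = ∑ γⱼ ψⱼ` and `t = ∑ γⱼ χⱼ`. Multiplying the primal constraints by `γⱼ` and summing splits the
primal objective into `⟪u, wμ - s⟫ - λ₂‖u‖²`, `⟪v, wν - t⟫ - λ₂‖v‖²`, `∑ γⱼ cⱼ` and
`-tr ((∑ γⱼ Φⱼ Φⱼᵀ + λ₁ Id) B)`. The trace of a product of two positive semidefinite matrices is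
nonnegative, and completing the square bounds the first two terms by `‖wμ - s‖² / (4λ₂)` and
`‖wν - t‖² / (4λ₂)`; expanding these norms through the Gram matrices of `ψ` and `χ` gives the dual
objective.
-/

open scoped InnerProductSpace Matrix ComplexOrder

namespace Matrix

variable {n 𝕜 : Type*} [Fintype n]

theorem PosSemidef.trace_mul_nonneg [RCLike 𝕜] {M B : Matrix n n 𝕜} (hM : M.PosSemidef)
    (hB : B.PosSemidef) : 0 ≤ (M * B).trace := by
  classical
  obtain ⟨C, rfl⟩ : ∃ C : Matrix n n 𝕜, B = Cᴴ * C := by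
    open scoped MatrixOrder in
    exact CStarAlgebra.nonneg_iff_eq_star_mul_self.mp hB.nonneg
  rw [← Matrix.mul_assoc, trace_mul_cycle]
  exact (hM.mul_mul_conjTranspose_same C).trace_nonneg

theorem trace_vecMulVec_mul {R : Type*} [CommSemiring R] (x y : n → R) (B : Matrix n n R) :
    (vecMulVec x y * B).trace = y ⬝ᵥ B *ᵥ x := by
  rw [vecMulVec_mul, trace_vecMulVec, dotProduct_comm, dotProduct_mulVec]

theorem trace_sum_smul_vecMulVec_add_smul_one_mul {ι R : Type*} [Fintype ι] [DecidableEq n]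
    [CommSemiring R] (γ : ι → R) (Φ : ι → n → R) (a : R) (B : Matrix n n R) :
    ((∑ j, γ j • vecMulVec (Φ j) (Φ j) + a • 1) * B).trace =
      ∑ j, γ j * (Φ j ⬝ᵥ B *ᵥ Φ j) + a * B.trace := by
  simp only [add_mul, Finset.sum_mul, smul_mul, one_mul, trace_add, trace_sum, trace_smul,
    trace_vecMulVec_mul, smul_eq_mul]

end Matrix

section InnerProductSpace

variable {E ι : Type*} [NormedAddCommGroup E] [InnerProductSpace ℝ E]

theorem inner_sub_mul_norm_sq_le {lam : ℝ} (hlam : 0 < lam) (u a : E) :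
    ⟪u, a⟫_ℝ - lam * ‖u‖ ^ 2 ≤ ‖a‖ ^ 2 / (4 * lam) := by
  calc ⟪u, a⟫_ℝ - lam * ‖u‖ ^ 2 ≤ ‖u‖ * ‖a‖ - lam * ‖u‖ ^ 2 := by
        gcongr; exact real_inner_le_norm u a
    _ ≤ ‖a‖ ^ 2 / (4 * lam) := by
        rw [le_div_iff₀ (by positivity)]
        nlinarith [sq_nonneg (2 * lam * ‖u‖ - ‖a‖)]

variable [Fintype ι]

theorem norm_sub_sum_smul_sq (w : E) (ψ : ι → E) (γ : ι → ℝ) :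
    ‖w - ∑ j, γ j • ψ j‖ ^ 2 =
      ‖w‖ ^ 2 - 2 * ∑ j, γ j * ⟪w, ψ j⟫_ℝ + γ ⬝ᵥ Matrix.gram ℝ ψ *ᵥ γ := by
  rw [norm_sub_sq_real, ← real_inner_self_eq_norm_sq (∑ j, γ j • ψ j),
    ← Matrix.star_dotProduct_gram_mulVec, star_trivial]
  simp only [inner_sum, real_inner_smul_right]

theorem inner_sub_mul_norm_sq_le_sum_inner_add {lam : ℝ} (hlam : 0 < lam) (u w : E)
    (ψ : ι → E) (γ : ι → ℝ) :
    ⟪u, w⟫_ℝ - lam * ‖u‖ ^ 2 ≤ ∑ j, γ j * ⟪u, ψ j⟫_ℝ +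
      (‖w‖ ^ 2 - 2 * ∑ j, γ j * ⟪w, ψ j⟫_ℝ + γ ⬝ᵥ Matrix.gram ℝ ψ *ᵥ γ) / (4 * lam) := by
  have h := inner_sub_mul_norm_sq_le hlam u (w - ∑ j, γ j • ψ j)
  rw [norm_sub_sum_smul_sq, inner_sub_right] at h
  simp only [inner_sum, real_inner_smul_right] at h
  linarith

end InnerProductSpace

theorem weak_duality_sos_ot_general
    (l : ℕ) (lam1 lam2 : ℝ) (hlam2 : 0 < lam2)
    {HX HY : Type*}
    [NormedAddCommGroup HX] [InnerProductSpace ℝ HX]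
    [NormedAddCommGroup HY] [InnerProductSpace ℝ HY]
    (wmu : HX) (psi : Fin l → HX) (wnu : HY) (chi : Fin l → HY)
    (c : Fin l → ℝ) (Phi : Fin l → Fin l → ℝ)
    (Q : Matrix (Fin l) (Fin l) ℝ)
    (hQ : Q = Matrix.of fun i j => ⟪psi i, psi j⟫_ℝ + ⟪chi i, chi j⟫_ℝ)
    (z : Fin l → ℝ)
    (hz : ∀ j, z j = ⟪wmu, psi j⟫_ℝ + ⟪wnu, chi j⟫_ℝ - 2 * lam2 * c j)
    (q2 : ℝ) (hq2 : q2 = ‖wmu‖ ^ 2 + ‖wnu‖ ^ 2)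
    -- primal feasible triple (u, v, B)
    (u : HX) (v : HY) (B : Matrix (Fin l) (Fin l) ℝ) (hB : B.PosSemidef)
    (hfeas : ∀ j, c j - ⟪u, psi j⟫_ℝ - ⟪v, chi j⟫_ℝ =
      dotProduct (Phi j) (B.mulVec (Phi j)))
    -- dual feasible γ
    (γ : Fin l → ℝ)
    (hγ : (∑ j, γ j • Matrix.vecMulVec (Phi j) (Phi j) +
      lam1 • (1 : Matrix (Fin l) (Fin l) ℝ)).PosSemidef) :
    ⟪u, wmu⟫_ℝ + ⟪v, wnu⟫_ℝ - lam1 * B.trace - lam2 * (‖u‖ ^ 2 + ‖v‖ ^ 2) ≤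
      (1 / (4 * lam2)) * dotProduct γ (Q.mulVec γ)
        - (1 / (2 * lam2)) * ∑ j, γ j * z j + q2 / (4 * lam2) := by
  have hQ_gram : Q = Matrix.gram ℝ psi + Matrix.gram ℝ chi := by
    rw [hQ]; rfl
  have hX := inner_sub_mul_norm_sq_le_sum_inner_add hlam2 u wmu psi γ
  have hY := inner_sub_mul_norm_sq_le_sum_inner_add hlam2 v wnu chi γ
  have hdual : 0 ≤ ∑ j, γ j * (Phi j ⬝ᵥ B *ᵥ Phi j) + lam1 * B.trace := by
    rw [← Matrix.trace_sum_smul_vecMulVec_add_smul_one_mul]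
    exact Matrix.PosSemidef.trace_mul_nonneg hγ hB
  have hprimal : ∑ j, γ j * (Phi j ⬝ᵥ B *ᵥ Phi j) =
      ∑ j, γ j * c j - ∑ j, γ j * ⟪u, psi j⟫_ℝ - ∑ j, γ j * ⟪v, chi j⟫_ℝ := by
    simp only [← hfeas, mul_sub, Finset.sum_sub_distrib]
  have hz_sum : ∑ j, γ j * z j = ∑ j, γ j * ⟪wmu, psi j⟫_ℝ + ∑ j, γ j * ⟪wnu, chi j⟫_ℝ -
      2 * lam2 * ∑ j, γ j * c j := by
    simp only [hz, mul_sub, mul_add, Finset.sum_sub_distrib, Finset.sum_add_distrib,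
      Finset.mul_sum, mul_left_comm (γ _)]
  have hcancel : lam2 * lam2⁻¹ = 1 := mul_inv_cancel₀ hlam2.ne'
  rw [hQ_gram, Matrix.add_mulVec, dotProduct_add, hz_sum, hq2]
  rw [hprimal] at hdual
  linear_combination hX + hY + hdual - (∑ j, γ j * c j) * hcancel

/-- Weak duality between the finite-dimensional regularized
sum-of-squares problem and its dual semidefinite program. -/
theorem weak_duality_sos_ot
    (l : ℕ) (hl : 1 ≤ l) (lam1 lam2 : ℝ) (hlam1 : 0 < lam1) (hlam2 : 0 < lam2)
    {HX HY : Type*}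
    [NormedAddCommGroup HX] [InnerProductSpace ℝ HX] [CompleteSpace HX]
    [NormedAddCommGroup HY] [InnerProductSpace ℝ HY] [CompleteSpace HY]
    (wmu : HX) (psi : Fin l → HX) (wnu : HY) (chi : Fin l → HY)
    (c : Fin l → ℝ) (Phi : Fin l → Fin l → ℝ)
    (Q : Matrix (Fin l) (Fin l) ℝ)
    (hQ : Q = Matrix.of fun i j => ⟪psi i, psi j⟫_ℝ + ⟪chi i, chi j⟫_ℝ)
    (z : Fin l → ℝ)
    (hz : ∀ j, z j = ⟪wmu, psi j⟫_ℝ + ⟪wnu, chi j⟫_ℝ - 2 * lam2 * c j)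
    (q2 : ℝ) (hq2 : q2 = ‖wmu‖ ^ 2 + ‖wnu‖ ^ 2)
    -- primal feasible triple (u, v, B)
    (u : HX) (v : HY) (B : Matrix (Fin l) (Fin l) ℝ) (hB : B.PosSemidef)
    (hfeas : ∀ j, c j - ⟪u, psi j⟫_ℝ - ⟪v, chi j⟫_ℝ =
      dotProduct (Phi j) (B.mulVec (Phi j)))
    -- dual feasible γ
    (γ : Fin l → ℝ)
    (hγ : (∑ j, γ j • Matrix.vecMulVec (Phi j) (Phi j) +
      lam1 • (1 : Matrix (Fin l) (Fin l) ℝ)).PosSemidef) :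
    ⟪u, wmu⟫_ℝ + ⟪v, wnu⟫_ℝ - lam1 * B.trace - lam2 * (‖u‖ ^ 2 + ‖v‖ ^ 2) ≤
      (1 / (4 * lam2)) * dotProduct γ (Q.mulVec γ)
        - (1 / (2 * lam2)) * ∑ j, γ j * z j + q2 / (4 * lam2) :=
  weak_duality_sos_ot_general l lam1 lam2 hlam2 wmu psi wnu chi c Phi Q hQ z hz q2 hq2 u v B hB
    hfeas γ hγ
end

section
/- Let q ≥ 1 and let Z ⊂ ℝ^q be a nonempty open bounded convex set. Then there exist constants c₁ > 0 and r₀ > 0 such that for every z ∈ Z and every r with 0 < r ≤ r₀, the Lebesgue measure of B(z, r) ∩ Z is at least c₁ r^q, where B(z, r) is the closed Euclidean ball of radius r centered at z. -/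
open MeasureTheory Metric ENNReal

/-- Uniform ball-volume lower bound for bounded convex open sets.
If `Z ⊂ ℝ^q` is a nonempty open bounded convex set, then there are `c₁ > 0` and
`r₀ > 0` such that `vol(B(z,r) ∩ Z) ≥ c₁ rᑫ` for every `z ∈ Z` and `0 < r ≤ r₀`. -/
theorem ball_volume_lower_bound_convex
    (q : ℕ) (hq : 1 ≤ q) (Z : Set (EuclideanSpace ℝ (Fin q)))
    (hne : Z.Nonempty) (hopen : IsOpen Z) (hbdd : Bornology.IsBounded Z)
    (hconv : Convex ℝ Z) :
    ∃ c₁ > (0:ℝ), ∃ r₀ > (0:ℝ), ∀ z ∈ Z, ∀ r : ℝ, 0 < r → r ≤ r₀ →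
      ENNReal.ofReal (c₁ * r ^ q) ≤ volume (Metric.closedBall z r ∩ Z) := by
  obtain ⟨z₀, hz₀⟩ := hne
  obtain ⟨ε, hε, hball⟩ := Metric.isOpen_iff.mp hopen z₀ hz₀
  obtain ⟨R, hZR⟩ := hbdd.subset_closedBall z₀
  have hR : 0 ≤ R := by
    have := hZR hz₀
    simpa using this
  have hRε : 0 < R + ε := by linarith
  set V : ℝ≥0∞ := volume (ball (0 : EuclideanSpace ℝ (Fin q)) 1) with hV
  have hVpos : 0 < V := measure_ball_pos volume 0 one_pos
  have hVlt : V < ⊤ := measure_ball_lt_top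
  refine ⟨(ε / 2 / (R + ε)) ^ q * V.toReal, ?_, ε, hε, ?_⟩
  · exact _root_.mul_pos (pow_pos (by positivity) q)
      (ENNReal.toReal_pos hVpos.ne' hVlt.ne)
  intro z hz r hr hrε
  set t : ℝ := r / (R + ε) with ht
  have ht0 : 0 < t := div_pos hr hRε
  have ht1 : t ≤ 1 := by
    rw [div_le_one hRε]; linarith
  set c : EuclideanSpace ℝ (Fin q) := z + t • (z₀ - z) with hc
  have hsub : closedBall c (t * (ε / 2)) ⊆ closedBall z r ∩ Z := by
    intro x hx
    rw [mem_closedBall, dist_eq_norm] at hx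
    constructor
    · rw [mem_closedBall, dist_eq_norm]
      have h1 : ‖x - z‖ ≤ ‖x - c‖ + ‖c - z‖ := by
        have : x - z = (x - c) + (c - z) := by abel
        rw [this]; exact norm_add_le _ _
      have h2 : ‖c - z‖ = t * ‖z₀ - z‖ := by
        rw [hc]
        simp [norm_smul, abs_of_pos ht0]
      have h3 : ‖z₀ - z‖ ≤ R := by
        have := hZR hz
        rw [mem_closedBall, dist_eq_norm] at this
        rw [show z₀ - z = -(z - z₀) by abel, norm_neg]
        exact this
      have h4 : t * (ε / 2) + t * R ≤ r := by
        have : t * (R + ε) = r := div_mul_cancel₀ r hRε.ne'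
        nlinarith
      calc ‖x - z‖ ≤ ‖x - c‖ + ‖c - z‖ := h1
        _ ≤ t * (ε / 2) + t * R := by
            have := mul_le_mul_of_nonneg_left h3 ht0.le
            rw [h2]; linarith
        _ ≤ r := h4
    · set y : EuclideanSpace ℝ (Fin q) := z₀ + t⁻¹ • (x - c) with hy
      have hyZ : y ∈ Z := by
        apply hball
        rw [mem_ball, dist_eq_norm]
        have hyz : y - z₀ = t⁻¹ • (x - c) := by rw [hy]; abel
        have this : ‖y - z₀‖ = t⁻¹ * ‖x - c‖ := by
          rw [hyz, norm_smul, Real.norm_eq_abs, abs_of_pos (inv_pos.mpr ht0)]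
        calc ‖y - z₀‖ = t⁻¹ * ‖x - c‖ := this
          _ ≤ t⁻¹ * (t * (ε / 2)) := by
              exact mul_le_mul_of_nonneg_left hx (inv_pos.mpr ht0).le
          _ = ε / 2 := by field_simp
          _ < ε := by linarith
      have hxeq : x = (1 - t) • z + t • y := by
        rw [hy, smul_add, smul_smul, mul_inv_cancel₀ ht0.ne', one_smul, hc]
        module
      rw [hxeq]
      exact hconv hz hyZ (by linarith) ht0.le (by ring)
  have hvol : volume (closedBall c (t * (ε / 2))) =
      ENNReal.ofReal ((t * (ε / 2)) ^ q) * V := by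
    rw [Measure.addHaar_closedBall volume c (by positivity), hV]
    rw [finrank_euclideanSpace_fin]
  calc ENNReal.ofReal ((ε / 2 / (R + ε)) ^ q * V.toReal * r ^ q)
      = ENNReal.ofReal ((t * (ε / 2)) ^ q * V.toReal) := by
        congr 1
        rw [ht]
        field_simp
        ring
    _ = ENNReal.ofReal ((t * (ε / 2)) ^ q) * V := by
        rw [ENNReal.ofReal_mul (by positivity), ENNReal.ofReal_toReal hVlt.ne]
    _ = volume (closedBall c (t * (ε / 2))) := hvol.symm
    _ ≤ volume (closedBall z r ∩ Z) := measure_mono hsub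
end

section
/- Let H be a separable real Hilbert space, let (Ω, 𝔉, μ) be a probability space together with a measurable space X, let x₁, …, x_n (n ≥ 1) be independent X-valued random variables with common law μ, and let φ : X → H be a strongly measurable map with ‖φ(x)‖ ≤ c for μ-almost every x, for some c > 0. Let w = ∫ φ(x) dμ(x) be the Bochner integral and ŵ = (1/n) Σ_{i=1}^n φ(x_i) the empirical mean. Then for every δ ∈ (0, 1], with probability at least 1 − δ, ‖w − ŵ‖ ≤ 4 c n^{-1/2} log(6n/δ). -/
open MeasureTheory ProbabilityTheory Finset Real
open scoped RealInnerProductSpace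

/-!
Following Pinelis, the norm is replaced by the smooth potential `V x = √(‖x‖² + n b²)`, where `b`
bounds the centred summands `Y = φ - ∫ φ dμ`. Since `V` is `1 / √(n b²)`-smooth, along the
partial sums `S k = ∑_{j < k} Y (x j)` one gets pathwise
`‖S n‖ ≤ V (S n) ≤ b √n + ∑ k, ⟪∇V (S k), Y (x k)⟫ + b √n / 2`.
The increments `Z k = ⟪∇V (S k), Y (x k)⟫` are bounded by `b` (as `‖∇V‖ ≤ 1`) and, `Y` being
centred and `x k` independent of the past, orthogonal to every bounded function of
`x 0, …, x (k-1)`. Hence `𝔼 ∏ k, (cosh (t b) + sinh (t b) / b * Z k) = cosh (t b) ^ n`, and the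
convexity bound `exp (t z) ≤ cosh (t b) + sinh (t b) / b * z` makes `∑ k, Z k` sub-Gaussian with
variance proxy `n b²` (Azuma–Hoeffding). The Chernoff bound with `b = 2c` and
`ε = c √n (4 log (6n/δ) - 3)` gives the claim.
-/

section SmoothNorm

variable {E H : Type*} [SeminormedAddCommGroup E] [NormedAddCommGroup H]
  [InnerProductSpace ℝ H] {r : ℝ}

noncomputable def smoothNorm (r : ℝ) (x : E) : ℝ := √(‖x‖ ^ 2 + r)

noncomputable def gradSmoothNorm (r : ℝ) (x : H) : H := (smoothNorm r x)⁻¹ • x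

lemma smoothNorm_nonneg (r : ℝ) (x : E) : 0 ≤ smoothNorm r x := sqrt_nonneg _

lemma smoothNorm_sq (hr : 0 ≤ r) (x : E) : smoothNorm r x ^ 2 = ‖x‖ ^ 2 + r :=
  sq_sqrt (by positivity)

lemma sqrt_le_smoothNorm (x : E) : √r ≤ smoothNorm r x :=
  sqrt_le_sqrt (by simp)

lemma norm_le_smoothNorm (hr : 0 ≤ r) (x : E) : ‖x‖ ≤ smoothNorm r x :=
  le_sqrt_of_sq_le (by linarith)

lemma smoothNorm_pos (hr : 0 < r) (x : E) : 0 < smoothNorm r x :=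
  (sqrt_pos.2 hr).trans_le (sqrt_le_smoothNorm x)

lemma continuous_smoothNorm (r : ℝ) : Continuous (smoothNorm (E := E) r) := by
  unfold smoothNorm; fun_prop

lemma continuous_gradSmoothNorm (hr : 0 < r) : Continuous (gradSmoothNorm (H := H) r) :=
  ((continuous_smoothNorm r).inv₀ fun x ↦ (smoothNorm_pos hr x).ne').smul continuous_id

lemma norm_gradSmoothNorm_le_one (hr : 0 ≤ r) (x : H) : ‖gradSmoothNorm r x‖ ≤ 1 := by
  rw [gradSmoothNorm, norm_smul, norm_inv, norm_of_nonneg (smoothNorm_nonneg r x)]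
  exact inv_mul_le_one_of_le₀ (norm_le_smoothNorm hr x) (smoothNorm_nonneg r x)

/-- `smoothNorm r` is `1 / √r`-smooth, with gradient `gradSmoothNorm r`. -/
lemma smoothNorm_add_le (hr : 0 < r) (x y : H) :
    smoothNorm r (x + y) ≤ smoothNorm r x + ⟪gradSmoothNorm r x, y⟫ + ‖y‖ ^ 2 / (2 * √r) := by
  set A := smoothNorm r x
  have hA : 0 < A := smoothNorm_pos hr x
  have hA2 : A ^ 2 = ‖x‖ ^ 2 + r := smoothNorm_sq hr.le x
  have hxy : ‖x + y‖ ^ 2 = ‖x‖ ^ 2 + 2 * ⟪x, y⟫ + ‖y‖ ^ 2 := norm_add_sq_real x y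
  have hgrad : ⟪gradSmoothNorm r x, y⟫ = ⟪x, y⟫ / A := by
    rw [gradSmoothNorm, real_inner_smul_left, inv_mul_eq_div]
  have hquad : smoothNorm r (x + y) ≤ A + ⟪x, y⟫ / A + ‖y‖ ^ 2 / (2 * A) := by
    set u := ⟪x, y⟫ / A + ‖y‖ ^ 2 / (2 * A)
    have hu : 2 * A * u = 2 * ⟪x, y⟫ + ‖y‖ ^ 2 := by simp only [u]; field_simp
    rw [add_assoc, smoothNorm, sqrt_le_iff]
    constructor
    · nlinarith [sq_nonneg ‖x + y‖]
    · nlinarith [sq_nonneg u]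
  have hlast : ‖y‖ ^ 2 / (2 * A) ≤ ‖y‖ ^ 2 / (2 * √r) :=
    div_le_div_of_nonneg_left (sq_nonneg _) (by positivity)
      (mul_le_mul_of_nonneg_left (sqrt_le_smoothNorm x) zero_le_two)
  linarith

lemma smoothNorm_sum_le {ι : Type*} [LinearOrder ι] (hr : 0 < r) (y : ι → H) (s : Finset ι) :
    smoothNorm r (∑ i ∈ s, y i) ≤ √r + ∑ i ∈ s,
      (⟪gradSmoothNorm r (∑ j ∈ s with j < i, y j), y i⟫ + ‖y i‖ ^ 2 / (2 * √r)) := by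
  induction s using Finset.induction_on_max with
  | empty => simp [smoothNorm]
  | insert a s has ih =>
    have hpast : ∀ i ∈ s, {j ∈ insert a s | j < i} = {j ∈ s | j < i} := fun i hi ↦ by
      rw [filter_insert, if_neg (has i hi).not_gt]
    have hlast : {j ∈ insert a s | j < a} = s := by
      rw [filter_insert, if_neg (lt_irrefl a), filter_true_of_mem has]
    have ha : a ∉ s := fun h ↦ lt_irrefl a (has a h)
    have hrest : ∑ i ∈ s, (⟪gradSmoothNorm r (∑ j ∈ insert a s with j < i, y j), y i⟫ +
          ‖y i‖ ^ 2 / (2 * √r)) =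
        ∑ i ∈ s, (⟪gradSmoothNorm r (∑ j ∈ s with j < i, y j), y i⟫ + ‖y i‖ ^ 2 / (2 * √r)) :=
      sum_congr rfl fun i hi ↦ by rw [hpast i hi]
    rw [sum_insert ha, sum_insert ha, hlast, hrest, add_comm (y a)]
    linarith [smoothNorm_add_le hr (∑ i ∈ s, y i) (y a)]

lemma norm_sum_le_sum_inner_gradSmoothNorm {ι : Type*} [Fintype ι] [LinearOrder ι] [Nonempty ι]
    {b : ℝ} (hb : 0 < b) (y : ι → H) (hy : ∀ i, ‖y i‖ ≤ b) :
    ‖∑ i, y i‖ ≤ 3 / 2 * b * √(Fintype.card ι) +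
      ∑ i, ⟪gradSmoothNorm (Fintype.card ι * b ^ 2) (∑ j with j < i, y j), y i⟫ := by
  set r : ℝ := Fintype.card ι * b ^ 2
  have hr : 0 < r := by positivity
  have hsqrt_r : √r = b * √(Fintype.card ι) := by
    rw [sqrt_mul' _ (sq_nonneg b), sqrt_sq hb.le, mul_comm]
  have hquad : ∑ i, ‖y i‖ ^ 2 / (2 * √r) ≤ √r / 2 := calc
    _ ≤ ∑ _i : ι, b ^ 2 / (2 * √r) := sum_le_sum fun i _ ↦ by gcongr; exact hy i
    _ = √r / 2 := by
      rw [sum_const, card_univ, nsmul_eq_mul]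
      field_simp
      rw [sq_sqrt hr.le]
  calc ‖∑ i, y i‖ ≤ smoothNorm r (∑ i, y i) := norm_le_smoothNorm hr.le _
    _ ≤ √r + ∑ i, (⟪gradSmoothNorm r (∑ j with j < i, y j), y i⟫ + ‖y i‖ ^ 2 / (2 * √r)) :=
        smoothNorm_sum_le hr _ _
    _ ≤ _ := by rw [sum_add_distrib]; linarith

end SmoothNorm

lemma exp_mul_le_cosh_add_sinh_div_mul {b : ℝ} (hb : 0 < b) (t : ℝ) {z : ℝ} (hz : |z| ≤ b) :
    exp (t * z) ≤ cosh (t * b) + sinh (t * b) / b * z := by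
  obtain ⟨hzl, hzu⟩ := abs_le.1 hz
  have hθ : 0 ≤ (b + z) / (2 * b) := div_nonneg (by linarith) (by positivity)
  have hθ' : 0 ≤ 1 - (b + z) / (2 * b) := by
    rw [sub_nonneg, div_le_one (by positivity)]; linarith
  have harg : (b + z) / (2 * b) * (t * b) + (1 - (b + z) / (2 * b)) * -(t * b) = t * z := by
    field_simp; ring
  have hval : (b + z) / (2 * b) * exp (t * b) + (1 - (b + z) / (2 * b)) * exp (-(t * b)) =
      cosh (t * b) + sinh (t * b) / b * z := by
    rw [Real.cosh_eq, Real.sinh_eq]; field_simp; ring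
  simpa only [smul_eq_mul, harg, hval] using
    convexOn_exp.2 (Set.mem_univ (t * b)) (Set.mem_univ (-(t * b))) hθ hθ' (add_sub_cancel _ _)

lemma abs_prod_add_mul_le {ι : Type*} {s : Finset ι} {f : ι → ℝ} {b : ℝ}
    (hf : ∀ i ∈ s, |f i| ≤ b) (a c : ℝ) :
    |∏ i ∈ s, (a + c * f i)| ≤ (|a| + |c| * b) ^ #s := by
  rw [abs_prod, ← prod_const]
  refine prod_le_prod (fun _ _ ↦ abs_nonneg _) fun i hi ↦ ?_
  calc |a + c * f i| ≤ |a| + |c| * |f i| := by rw [← abs_mul]; exact abs_add_le _ _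
    _ ≤ |a| + |c| * b := by gcongr; exact hf i hi

section MartingaleDifference

variable {ι X : Type*} [LinearOrder ι] [MeasurableSpace X] {ν : Measure (ι → X)}

/-- A martingale-difference condition for the coordinate filtration, stated without conditional
expectations. -/
def IsOrthogonalToPast (ν : Measure (ι → X)) (Z : ι → (ι → X) → ℝ) : Prop :=
  ∀ i (h : (ι → X) → ℝ), Measurable h → (∃ C, ∀ v, |h v| ≤ C) → DependsOn h (Set.Iio i) →
    ∫ v, h v * Z i v ∂ν = 0

variable [IsProbabilityMeasure ν] {Z : ι → (ι → X) → ℝ} {b : ℝ}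

lemma integral_prod_add_mul_eq_pow (hZm : ∀ i, Measurable (Z i)) (hZb : ∀ i v, |Z i v| ≤ b)
    (hZdep : ∀ i, DependsOn (Z i) (Set.Iic i)) (hZ : IsOrthogonalToPast ν Z) (a c : ℝ)
    (s : Finset ι) : ∫ v, ∏ i ∈ s, (a + c * Z i v) ∂ν = a ^ #s := by
  induction s using Finset.induction_on_max with
  | empty => simp
  | insert i s hs ih =>
    set P : (ι → X) → ℝ := fun v ↦ ∏ j ∈ s, (a + c * Z j v)
    have hPm : Measurable P := Finset.measurable_prod _ fun j _ ↦ by fun_prop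
    have hPb : ∀ v, |P v| ≤ (|a| + |c| * b) ^ #s := fun v ↦
      abs_prod_add_mul_le (fun j _ ↦ hZb j v) a c
    have hPdep : DependsOn P (Set.Iio i) := fun v w hvw ↦ prod_congr rfl fun j hj ↦ by
      rw [hZdep j fun k hk ↦ hvw k ((Set.mem_Iic.1 hk).trans_lt (hs j hj))]
    have hPint : Integrable P ν :=
      .of_bound hPm.aestronglyMeasurable _ (.of_forall fun v ↦ (hPb v))
    have hPZint : Integrable (fun v ↦ P v * Z i v) ν :=
      .of_bound (hPm.mul (hZm i)).aestronglyMeasurable ((|a| + |c| * b) ^ #s * b)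
        (.of_forall fun v ↦ by
          rw [norm_mul]
          exact mul_le_mul (hPb v) (hZb i v) (norm_nonneg _) ((abs_nonneg _).trans (hPb v)))
    have hi : i ∉ s := fun h ↦ lt_irrefl i (hs i h)
    simp_rw [prod_insert hi, card_insert_of_notMem hi]
    calc ∫ v, (a + c * Z i v) * P v ∂ν = ∫ v, (a * P v + c * (P v * Z i v)) ∂ν := by
          congr 1 with v; ring
      _ = a * a ^ #s + c * 0 := by
          rw [integral_add (hPint.const_mul a) (hPZint.const_mul c), integral_const_mul,
            integral_const_mul, ih, hZ i P hPm ⟨_, hPb⟩ hPdep]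
      _ = a ^ (#s + 1) := by ring

lemma hasSubgaussianMGF_sum_of_isOrthogonalToPast [Fintype ι] (hZm : ∀ i, Measurable (Z i))
    (hb : 0 < b) (hZb : ∀ i v, |Z i v| ≤ b) (hZdep : ∀ i, DependsOn (Z i) (Set.Iic i))
    (hZ : IsOrthogonalToPast ν Z) :
    HasSubgaussianMGF (fun v ↦ ∑ i, Z i v) (Fintype.card ι * b ^ 2).toNNReal ν := by
  have hsum_le : ∀ t v, t * ∑ i, Z i v ≤ Fintype.card ι * (|t| * b) := fun t v ↦ by
    calc t * ∑ i, Z i v = ∑ i, t * Z i v := mul_sum _ _ _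
      _ ≤ ∑ _i : ι, |t| * b := sum_le_sum fun i _ ↦
          (le_abs_self _).trans (by rw [abs_mul]; gcongr; exact hZb i v)
      _ = Fintype.card ι * (|t| * b) := by simp
  refine ⟨fun t ↦ .of_bound (by fun_prop) (exp (Fintype.card ι * (|t| * b)))
    (.of_forall fun v ↦ ?_), fun t ↦ ?_⟩
  · rw [norm_of_nonneg (exp_pos _).le]; exact exp_le_exp.2 (hsum_le t v)
  calc mgf (fun v ↦ ∑ i, Z i v) ν t
      ≤ ∫ v, ∏ i, (cosh (t * b) + sinh (t * b) / b * Z i v) ∂ν := by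
        refine integral_mono_of_nonneg (.of_forall fun _ ↦ (exp_pos _).le) ?_
          (.of_forall fun v ↦ ?_)
        · exact .of_bound (by fun_prop) _ (.of_forall fun v ↦ abs_prod_add_mul_le
            (fun i _ ↦ hZb i v) _ _)
        · show exp (t * ∑ i, Z i v) ≤ _
          rw [mul_sum, exp_sum]
          exact prod_le_prod (fun _ _ ↦ (exp_pos _).le)
            fun i _ ↦ exp_mul_le_cosh_add_sinh_div_mul hb t (hZb i v)
    _ = cosh (t * b) ^ Fintype.card ι := integral_prod_add_mul_eq_pow hZm hZb hZdep hZ _ _ _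
    _ ≤ exp ((t * b) ^ 2 / 2) ^ Fintype.card ι := by gcongr; exact cosh_le_exp_half_sq _
    _ = exp ((Fintype.card ι * b ^ 2).toNNReal * t ^ 2 / 2) := by
        rw [← exp_nat_mul, Real.coe_toNNReal _ (by positivity)]; ring_nf

end MartingaleDifference

lemma norm_sub_inv_smul_sum {E : Type*} [NormedAddCommGroup E] [NormedSpace ℝ E] {n : ℕ}
    (hn : n ≠ 0) (w : E) (u : Fin n → E) :
    ‖w - (n : ℝ)⁻¹ • ∑ i, u i‖ = (n : ℝ)⁻¹ * ‖∑ i, (u i - w)‖ := by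
  have hw : w = (n : ℝ)⁻¹ • ∑ _i : Fin n, w := by
    rw [sum_const, card_univ, Fintype.card_fin, ← Nat.cast_smul_eq_nsmul ℝ, smul_smul,
      inv_mul_cancel₀ (by exact_mod_cast hn), one_smul]
  calc ‖w - (n : ℝ)⁻¹ • ∑ i, u i‖ = ‖(n : ℝ)⁻¹ • (∑ i, u i - ∑ _i : Fin n, w)‖ := by
        rw [smul_sub, ← hw, norm_sub_rev]
    _ = (n : ℝ)⁻¹ * ‖∑ i, (u i - w)‖ := by
        rw [norm_smul, norm_inv, norm_natCast, sum_sub_distrib]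

section Concentration

variable {H : Type*} [NormedAddCommGroup H] [InnerProductSpace ℝ H] [CompleteSpace H]

section ProductSpace

variable {X : Type*} [MeasurableSpace X] {μ : Measure X} [IsProbabilityMeasure μ] {n : ℕ}

lemma integral_inner_comp_eval_eq_zero {g : (Fin n → X) → H} (hg : StronglyMeasurable g)
    {C : ℝ} (hgC : ∀ v, ‖g v‖ ≤ C) {i : Fin n} (hgi : DependsOn g {i}ᶜ)
    {Y : X → H} (hY : Integrable Y μ) (hY0 : ∫ x, Y x ∂μ = 0) :
    ∫ v, ⟪g v, Y (v i)⟫ ∂Measure.pi (fun _ ↦ μ) = 0 := by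
  cases n with
  | zero => exact i.elim0
  | succ m =>
  obtain ⟨x₀⟩ := nonempty_of_isProbabilityMeasure μ
  let e := MeasurableEquiv.piFinSuccAbove (fun _ ↦ X) i
  let G : (Fin m → X) → H := fun r ↦ g (e.symm (x₀, r))
  have he : ∀ z, g (e.symm z) = G z.2 := fun ⟨x, r⟩ ↦ hgi fun j hj ↦ by
    obtain ⟨k, rfl⟩ := Fin.exists_succAbove_eq hj
    simp [e, MeasurableEquiv.piFinSuccAbove_symm_apply]
  have hGm : StronglyMeasurable G :=
    hg.comp_measurable (e.symm.measurable.comp measurable_prodMk_left)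
  have hint : Integrable (fun z : X × (Fin m → X) ↦ ⟪G z.2, Y z.1⟫)
      (μ.prod (Measure.pi fun _ ↦ μ)) := by
    refine ((hY.norm.comp_fst _).const_mul C).mono'
      (hGm.aestronglyMeasurable.comp_snd.inner hY.aestronglyMeasurable.comp_fst)
      (.of_forall fun z ↦ ?_)
    calc ‖⟪G z.2, Y z.1⟫‖ ≤ ‖G z.2‖ * ‖Y z.1‖ := norm_inner_le_norm _ _
      _ ≤ C * ‖Y z.1‖ := by gcongr; exact hgC _
  rw [← (measurePreserving_piFinSuccAbove (fun _ ↦ μ) i).symm.integral_comp']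
  show ∫ z, ⟪g (e.symm z), Y (e.symm z i)⟫ ∂_ = 0
  have hei : ∀ z, e.symm z i = z.1 := fun z ↦ by
    simp [e, MeasurableEquiv.piFinSuccAbove_symm_apply]
  simp_rw [he, hei]
  rw [integral_prod_symm _ hint]
  simp_rw [integral_inner hY, hY0, inner_zero_right, integral_zero]

lemma isOrthogonalToPast_inner_comp_eval {G : Fin n → (Fin n → X) → H}
    (hG : ∀ i, StronglyMeasurable (G i)) (hG1 : ∀ i v, ‖G i v‖ ≤ 1)
    (hGdep : ∀ i, DependsOn (G i) (Set.Iio i)) {Y : X → H} (hY : Integrable Y μ)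
    (hY0 : ∫ x, Y x ∂μ = 0) :
    IsOrthogonalToPast (Measure.pi fun _ ↦ μ) (fun i v ↦ ⟪G i v, Y (v i)⟫) := by
  rintro i h hm ⟨C, hC⟩ hdep
  simp_rw [← real_inner_smul_left]
  refine integral_inner_comp_eval_eq_zero (hm.stronglyMeasurable.smul (hG i)) (C := C)
    (fun v ↦ ?_) (fun v w hvw ↦ ?_) hY hY0
  · show ‖h v • G i v‖ ≤ C
    rw [norm_smul, norm_eq_abs, ← mul_one C]
    exact mul_le_mul (hC v) (hG1 i v) (norm_nonneg _) ((abs_nonneg _).trans (hC v))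
  · have hpast : ∀ j ∈ Set.Iio i, v j = w j := fun j hj ↦ hvw j (ne_of_lt hj)
    show h v • G i v = h w • G i w
    rw [hdep hpast, hGdep i hpast]

theorem measureReal_pi_norm_sum_ge_le {Y : X → H} (hYm : StronglyMeasurable Y) {b : ℝ} (hb : 0 < b)
    (hYb : ∀ x, ‖Y x‖ ≤ b) (hY0 : ∫ x, Y x ∂μ = 0) (hn : 0 < n) {ε : ℝ} (hε : 0 ≤ ε) :
    (Measure.pi fun _ : Fin n ↦ μ).real {v | 3 / 2 * b * √n + ε ≤ ‖∑ i, Y (v i)‖} ≤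
      exp (-ε ^ 2 / (2 * (n * b ^ 2))) := by
  set r : ℝ := n * b ^ 2
  have hr : 0 < r := by positivity
  let G : Fin n → (Fin n → X) → H := fun i v ↦ gradSmoothNorm r (∑ j with j < i, Y (v j))
  let Z : Fin n → (Fin n → X) → ℝ := fun i v ↦ ⟪G i v, Y (v i)⟫
  have hpath : ∀ v, ‖∑ i, Y (v i)‖ ≤ 3 / 2 * b * √n + ∑ i, Z i v := fun v ↦ by
    have : Nonempty (Fin n) := ⟨⟨0, hn⟩⟩
    simpa only [Fintype.card_fin] using
      norm_sum_le_sum_inner_gradSmoothNorm hb (fun i ↦ Y (v i)) fun i ↦ hYb (v i)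
  have hG : ∀ i, StronglyMeasurable (G i) := fun i ↦
    (continuous_gradSmoothNorm hr).comp_stronglyMeasurable <|
      Finset.stronglyMeasurable_fun_sum _ fun j _ ↦ hYm.comp_measurable (measurable_pi_apply j)
  have hGdep : ∀ i, DependsOn (G i) (Set.Iio i) := fun i v w hvw ↦ by
    simp only [G]
    congr 1
    exact sum_congr rfl fun j hj ↦ by rw [hvw j (mem_filter.1 hj).2]
  have hZb : ∀ i v, |Z i v| ≤ b := fun i v ↦ calc
    |Z i v| ≤ ‖G i v‖ * ‖Y (v i)‖ := abs_real_inner_le_norm _ _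
    _ ≤ 1 * b := by gcongr; exacts [norm_gradSmoothNorm_le_one hr.le _, hYb (v i)]
    _ = b := one_mul b
  have hZdep : ∀ i, DependsOn (Z i) (Set.Iic i) := fun i v w hvw ↦ by
    simp only [Z]
    rw [hGdep i fun j hj ↦ hvw j (Set.mem_Iic.2 (Set.mem_Iio.1 hj).le),
      hvw i (Set.mem_Iic.2 le_rfl)]
  have hsubG := hasSubgaussianMGF_sum_of_isOrthogonalToPast (Z := Z) (fun i ↦ (hG i).inner
    (hYm.comp_measurable (measurable_pi_apply i)) |>.measurable) hb hZb hZdep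
    (isOrthogonalToPast_inner_comp_eval hG (fun i v ↦ norm_gradSmoothNorm_le_one hr.le _) hGdep
      (.of_bound hYm.aestronglyMeasurable b (.of_forall hYb)) hY0)
  calc (Measure.pi fun _ : Fin n ↦ μ).real {v | 3 / 2 * b * √n + ε ≤ ‖∑ i, Y (v i)‖}
      ≤ (Measure.pi fun _ : Fin n ↦ μ).real {v | ε ≤ ∑ i, Z i v} :=
        measureReal_mono fun v (hv : 3 / 2 * b * √n + ε ≤ _) ↦
          show ε ≤ ∑ i, Z i v by linarith [hpath v]
    _ ≤ exp (-ε ^ 2 / (2 * (n * b ^ 2))) := by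
        have hr' : (0 : ℝ) ≤ n * b ^ 2 := hr.le
        simpa only [Fintype.card_fin, Real.coe_toNNReal _ hr'] using hsubG.measure_ge_le hε

end ProductSpace

section IID

variable {X Ω : Type*} [MeasurableSpace X] [MeasurableSpace Ω] {μ : Measure X}
  [IsProbabilityMeasure μ] {P : Measure Ω} [IsProbabilityMeasure P] {n : ℕ}

theorem measureReal_norm_sum_ge_le_of_iIndepFun {x : Fin n → Ω → X} (hx : ∀ i, Measurable (x i))
    (hindep : iIndepFun x P) (hlaw : ∀ i, P.map (x i) = μ) {Y : X → H}
    (hYm : AEStronglyMeasurable Y μ) {b : ℝ} (hb : 0 < b) (hYb : ∀ᵐ a ∂μ, ‖Y a‖ ≤ b)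
    (hY0 : ∫ a, Y a ∂μ = 0) (hn : 0 < n) {ε : ℝ} (hε : 0 ≤ ε) :
    P.real {ω | 3 / 2 * b * √n + ε ≤ ‖∑ i, Y (x i ω)‖} ≤ exp (-ε ^ 2 / (2 * (n * b ^ 2))) := by
  set Y' : X → H := {a | ‖hYm.mk Y a‖ ≤ b}.indicator (hYm.mk Y)
  have hY'm : StronglyMeasurable Y' := hYm.stronglyMeasurable_mk.indicator
    (measurableSet_le hYm.stronglyMeasurable_mk.norm.measurable measurable_const)
  have hY'b : ∀ a, ‖Y' a‖ ≤ b := fun a ↦ by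
    by_cases h : ‖hYm.mk Y a‖ ≤ b <;> simp [Y', h, hb.le]
  have hYY' : Y =ᵐ[μ] Y' := by
    filter_upwards [hYm.ae_eq_mk, hYb] with a h1 h2
    simp [Y', ← h1, h2]
  have hsamples : ∀ᵐ ω ∂P, ∀ i, Y (x i ω) = Y' (x i ω) := ae_all_iff.2 fun i ↦
    ae_of_ae_map (hx i).aemeasurable (by rw [hlaw i]; exact hYY')
  have hT : Measurable fun ω i ↦ x i ω := measurable_pi_lambda _ hx
  have hlawT : P.map (fun ω i ↦ x i ω) = Measure.pi fun _ ↦ μ := by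
    rw [(iIndepFun_iff_map_fun_eq_pi_map fun i ↦ (hx i).aemeasurable).1 hindep]
    simp_rw [hlaw]
  calc P.real {ω | 3 / 2 * b * √n + ε ≤ ‖∑ i, Y (x i ω)‖}
      = P.real ((fun ω i ↦ x i ω) ⁻¹' {v | 3 / 2 * b * √n + ε ≤ ‖∑ i, Y' (v i)‖}) := by
        refine measureReal_congr (hsamples.mono fun ω hω ↦ ?_)
        show (_ ≤ ‖∑ i, Y (x i ω)‖) = (_ ≤ ‖∑ i, Y' (x i ω)‖)
        simp only [hω]
    _ ≤ (Measure.pi fun _ ↦ μ).real {v | 3 / 2 * b * √n + ε ≤ ‖∑ i, Y' (v i)‖} := by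
        rw [← hlawT]
        exact ENNReal.toReal_mono (measure_ne_top _ _) (Measure.le_map_apply hT.aemeasurable _)
    _ ≤ exp (-ε ^ 2 / (2 * (n * b ^ 2))) :=
        measureReal_pi_norm_sum_ge_le hY'm hb hY'b ((integral_congr_ae hYY').symm.trans hY0) hn hε

theorem measureReal_mul_norm_integral_sub_empirical_mean_ge_le {x : Fin n → Ω → X}
    (hx : ∀ i, Measurable (x i)) (hindep : iIndepFun x P) (hlaw : ∀ i, P.map (x i) = μ)
    {φ : X → H} (hφ : AEStronglyMeasurable φ μ) {c : ℝ} (hc : 0 < c)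
    (hφc : ∀ᵐ a ∂μ, ‖φ a‖ ≤ c) (hn : 0 < n) {ε : ℝ} (hε : 0 ≤ ε) :
    P.real {ω | 3 * c * √n + ε ≤ n * ‖∫ a, φ a ∂μ - (n : ℝ)⁻¹ • ∑ i, φ (x i ω)‖} ≤
      exp (-ε ^ 2 / (8 * n * c ^ 2)) := by
  set w := ∫ a, φ a ∂μ
  have hw : ‖w‖ ≤ c := by simpa using norm_integral_le_of_norm_le_const hφc
  have hY0 : ∫ a, (φ a - w) ∂μ = 0 := by
    rw [integral_sub (.of_bound hφ c hφc) (integrable_const w)]; simp [w]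
  have hset : ∀ ω, n * ‖w - (n : ℝ)⁻¹ • ∑ i, φ (x i ω)‖ = ‖∑ i, (φ (x i ω) - w)‖ := fun ω ↦ by
    rw [norm_sub_inv_smul_sum hn.ne', mul_inv_cancel_left₀ (by positivity)]
  simp_rw [hset]
  convert measureReal_norm_sum_ge_le_of_iIndepFun hx hindep hlaw (Y := fun a ↦ φ a - w)
    (hφ.sub aestronglyMeasurable_const)
    (by positivity) (b := 2 * c) (by filter_upwards [hφc] with a ha; linarith [norm_sub_le (φ a) w])
    hY0 hn hε using 2
  · ext ω; rw [Set.mem_ofPred_eq, Set.mem_ofPred_eq]; ring_nf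
  · ring

end IID

end Concentration

lemma one_le_log_six : 1 ≤ log 6 := by
  rw [le_log_iff_exp_le (by norm_num)]; linarith [exp_one_lt_three]

lemma exp_neg_four_mul_log_sub_three_sq_div_eight_le {n δ : ℝ} (hn : 1 ≤ n) (hδ : 0 < δ) :
    exp (-(4 * log (6 * n / δ) - 3) ^ 2 / 8) ≤ δ := by
  set L := log (6 * n / δ)
  calc exp (-(4 * L - 3) ^ 2 / 8) ≤ exp (log 6 - L) :=
        exp_le_exp.2 (by nlinarith [one_le_log_six, sq_nonneg (L - 1)])
    _ = δ / n := by
        rw [exp_sub, exp_log (by norm_num), exp_log (by positivity)]; field_simp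
    _ ≤ δ := div_le_self hδ.le hn

lemma ofReal_one_sub_le_of_measure_compl_le {Ω : Type*} [MeasurableSpace Ω] {P : Measure Ω}
    [IsProbabilityMeasure P] {s : Set Ω} {δ : ℝ} (hδ : 0 ≤ δ) (h : P sᶜ ≤ ENNReal.ofReal δ) :
    ENNReal.ofReal (1 - δ) ≤ P s := by
  have hcover : 1 ≤ P s + P sᶜ := by
    simpa [measure_univ] using measure_union_le (μ := P) s sᶜ
  rw [ENNReal.ofReal_sub _ hδ, ENNReal.ofReal_one, tsub_le_iff_right]
  exact hcover.trans (by gcongr)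

theorem empirical_mean_embedding_concentration_general
    {H : Type*} [NormedAddCommGroup H] [InnerProductSpace ℝ H] [CompleteSpace H]
    {X : Type*} [MeasurableSpace X]
    {Ω : Type*} [MeasurableSpace Ω] (P : Measure Ω) [IsProbabilityMeasure P]
    (n : ℕ) (hn : 1 ≤ n)
    (x : Fin n → Ω → X) (hmeas : ∀ i, Measurable (x i))
    (hindep : iIndepFun x P)
    (μ : Measure X) [IsProbabilityMeasure μ] (hlaw : ∀ i, P.map (x i) = μ)
    (φ : X → H) (hφ : StronglyMeasurable φ)
    (c : ℝ) (hc : 0 < c) (hbound : ∀ᵐ a ∂μ, ‖φ a‖ ≤ c) :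
    ∀ δ : ℝ, δ ∈ Set.Ioc (0:ℝ) 1 →
      ENNReal.ofReal (1 - δ) ≤
        P {ω | ‖(∫ a, φ a ∂μ) - (n : ℝ)⁻¹ • ∑ i, φ (x i ω)‖ ≤
          4 * c * (n : ℝ) ^ (-(1:ℝ) / 2) * Real.log (6 * n / δ)} := by
  rintro δ ⟨hδ0, hδ1⟩
  set L := log (6 * n / δ)
  have hn1 : (1 : ℝ) ≤ n := by exact_mod_cast hn
  have hL : 1 ≤ L := one_le_log_six.trans
    (log_le_log (by norm_num) (by rw [le_div_iff₀ hδ0]; nlinarith))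
  have hthreshold : 3 * c * √n + c * √n * (4 * L - 3) =
      n * (4 * c * (n : ℝ) ^ (-(1 : ℝ) / 2) * L) := by
    rw [neg_div, rpow_neg (by positivity), ← sqrt_eq_rpow]
    field_simp
    rw [sq_sqrt (by positivity)]
    ring
  have hexponent : -(c * √n * (4 * L - 3)) ^ 2 / (8 * n * c ^ 2) = -(4 * L - 3) ^ 2 / 8 := by
    rw [mul_pow, mul_pow, sq_sqrt (by positivity)]; field_simp
  refine ofReal_one_sub_le_of_measure_compl_le hδ0.le ?_
  calc P {ω | ‖∫ a, φ a ∂μ - (n : ℝ)⁻¹ • ∑ i, φ (x i ω)‖ ≤ 4 * c * (n : ℝ) ^ (-(1 : ℝ) / 2) * L}ᶜ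
      ≤ P {ω | 3 * c * √n + c * √n * (4 * L - 3) ≤
          n * ‖∫ a, φ a ∂μ - (n : ℝ)⁻¹ • ∑ i, φ (x i ω)‖} := by
        refine measure_mono fun ω hω ↦ ?_
        simp only [Set.mem_compl_iff, Set.mem_ofPred_eq, not_le] at hω
        rw [Set.mem_ofPred_eq, hthreshold]
        exact (mul_lt_mul_of_pos_left hω (by positivity)).le
    _ = ENNReal.ofReal (P.real _) := (ofReal_measureReal).symm
    _ ≤ ENNReal.ofReal δ := ENNReal.ofReal_le_ofReal <|
        (measureReal_mul_norm_integral_sub_empirical_mean_ge_le hmeas hindep hlaw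
          hφ.aestronglyMeasurable hc hbound hn (ε := c * √n * (4 * L - 3))
          (mul_nonneg (by positivity) (by linarith))).trans
        (by rw [hexponent]; exact exp_neg_four_mul_log_sub_three_sq_div_eight_le hn1 hδ0)

/-- Concentration of the empirical kernel mean embedding.
Let `H` be a separable real Hilbert space, `x₁, …, x_n` i.i.d. with law `μ`, and
`φ : X → H` strongly measurable with `‖φ(x)‖ ≤ c` `μ`-a.e. Then for every
`δ ∈ (0,1]`, with probability at least `1 - δ`,
`‖∫ φ dμ - (1/n) Σ_i φ(x_i)‖ ≤ 4 c n^{-1/2} log(6n/δ)`. -/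
theorem empirical_mean_embedding_concentration
    {H : Type*} [NormedAddCommGroup H] [InnerProductSpace ℝ H] [CompleteSpace H]
    [TopologicalSpace.SeparableSpace H]
    {X : Type*} [MeasurableSpace X]
    {Ω : Type*} [MeasurableSpace Ω] (P : Measure Ω) [IsProbabilityMeasure P]
    (n : ℕ) (hn : 1 ≤ n)
    (x : Fin n → Ω → X) (hmeas : ∀ i, Measurable (x i))
    (hindep : iIndepFun x P)
    (μ : Measure X) [IsProbabilityMeasure μ] (hlaw : ∀ i, P.map (x i) = μ)
    (φ : X → H) (hφ : StronglyMeasurable φ)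
    (c : ℝ) (hc : 0 < c) (hbound : ∀ᵐ a ∂μ, ‖φ a‖ ≤ c) :
    ∀ δ : ℝ, δ ∈ Set.Ioc (0:ℝ) 1 →
      ENNReal.ofReal (1 - δ) ≤
        P {ω | ‖(∫ a, φ a ∂μ) - (n : ℝ)⁻¹ • ∑ i, φ (x i ω)‖ ≤
          4 * c * (n : ℝ) ^ (-(1:ℝ) / 2) * Real.log (6 * n / δ)} :=
  empirical_mean_embedding_concentration_general P n hn x hmeas hindep μ hlaw φ hφ c hc hbound
end
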